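/- arXiv:2507.03837 — 3 statements merged into one kernel-verified Lean document; each statement's English description precedes it below -/
import Mathlib

section
/- Let c ∈ (0,1) and let ω : ℕ × [c,1] → ℝ and A : [c,1] → ℝ satisfy: each ω(p, ·) is continuous on [c,1], A is continuous on [c,1], ω(p,τ) ≤ ω(q,τ) whenever p ≤ q, and for every τ ∈ [c,1] the sequence p ↦ ω(p,τ) is unbounded above. Define f(τ) to be the largest k ∈ ℕ with ω(1,τ) = ω(2,τ) = ⋯ = ω(k,τ) = A(τ) if ω(1,τ) = A(τ), and f(τ) = 0 otherwise. Then f is bounded on [c,1], i.e. there exists N ∈ ℕ with f(τ) ≤ N for all τ ∈ [c,1]. -/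
theorem stmt_6 (c : ℝ) (hc : c ∈ Set.Ioo (0:ℝ) 1) (ω : ℕ → ℝ → ℝ) (A : ℝ → ℝ)
    (hωc : ∀ p, ContinuousOn (ω p) (Set.Icc c 1))
    (hA : ContinuousOn A (Set.Icc c 1))
    (hmono : ∀ τ ∈ Set.Icc c 1, ∀ p q : ℕ, p ≤ q → ω p τ ≤ ω q τ)
    (hub : ∀ τ ∈ Set.Icc c 1, ¬ BddAbove (Set.range (fun p => ω p τ))) :
    ∃ N : ℕ, ∀ τ ∈ Set.Icc c 1,
      sSup {k : ℕ | ∀ i : ℕ, 1 ≤ i → i ≤ k → ω i τ = A τ} ≤ N := by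
  classical
  -- for each τ, pick p with A τ < ω p τ
  have hp : ∀ τ ∈ Set.Icc c 1, ∃ p : ℕ, A τ < ω p τ := by
    intro τ hτ
    have := (not_bddAbove_iff).mp (hub τ hτ) (A τ)
    obtain ⟨y, ⟨p, hp⟩, hy⟩ := this
    exact ⟨p, by simpa [hp] using hy⟩
  choose! p hpgt using hp
  -- for each τ ∈ Icc, an open neighborhood V τ where ω (p τ) > A persists on Icc
  have hV : ∀ τ ∈ Set.Icc c 1, ∃ V : Set ℝ, IsOpen V ∧ τ ∈ V ∧
      ∀ y ∈ V ∩ Set.Icc c 1, A y < ω (p τ) y := by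
    intro τ hτ
    have hcw : ContinuousWithinAt (fun y => ω (p τ) y - A y) (Set.Icc c 1) τ :=
      ((hωc (p τ)).sub hA).continuousWithinAt hτ
    have hpos : (0:ℝ) < ω (p τ) τ - A τ := sub_pos.mpr (hpgt τ hτ)
    have hmem : {y : ℝ | 0 < ω (p τ) y - A y} ∈ nhdsWithin τ (Set.Icc c 1) :=
      hcw (Ioi_mem_nhds hpos)
    rw [mem_nhdsWithin] at hmem
    obtain ⟨u, hu, hτu, hsub⟩ := hmem
    exact ⟨u, hu, hτu, fun y hy => sub_pos.mp (hsub hy)⟩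
  choose! V hVopen hVmem hVgt using hV
  -- compactness: finite subcover
  have hcomp : IsCompact (Set.Icc c 1) := isCompact_Icc
  obtain ⟨t, htmem, htcov⟩ := hcomp.elim_nhds_subcover V
    (fun τ hτ => (hVopen τ hτ).mem_nhds (hVmem τ hτ))
  refine ⟨t.sup p, fun τ hτ => ?_⟩
  -- find x ∈ t with τ ∈ V x
  obtain ⟨x, hxt, hxV⟩ := Set.mem_iUnion₂.mp (htcov hτ)
  have hxIcc := htmem x hxt
  have hgt : A τ < ω (p x) τ := hVgt x hxIcc τ ⟨hxV, hτ⟩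
  have hpx : p x ≤ t.sup p := Finset.le_sup hxt
  -- bound the sSup
  have hne : (0:ℕ) ∈ {k : ℕ | ∀ i : ℕ, 1 ≤ i → i ≤ k → ω i τ = A τ} := by
    intro i h1 h0; omega
  refine csSup_le ⟨0, hne⟩ ?_
  intro k hk
  by_contra hlt
  push_neg at hlt
  have h1k : 1 ≤ k := by omega
  have hik : max (p x) 1 ≤ k := by
    have : p x ≤ t.sup p := hpx
    omega
  have := hk (max (p x) 1) (le_max_right _ _) hik
  have hmon := hmono τ hτ (p x) (max (p x) 1) (le_max_left _ _)
  linarith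
end

section
/- Fix a real constant π > 0. Let ω : ℕ × (0,1] → ℝ and A : (0,1] → ℝ satisfy: (i) A is continuous and A(τ) ≥ 2π for all τ; (ii) each ω(p,·) is continuous; (iii) ω(p,τ) ≤ ω(q,τ) for p ≤ q; (iv) ω(p,τ) ≤ 2π²·τ·⌊√p⌋ for all p ≥ 1 and τ ∈ (0,1]; (v) for every τ ∈ (0,1], the sequence p ↦ ω(p,τ) is unbounded above; (vi) ω(1,1) = A(1). Then there exist τ* ∈ (0,1) and an integer p > 1 such that A(τ*) = ω(p,τ*) > ω(1,τ*). -/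
theorem stmt_9 (π : ℝ) (hπ : 0 < π) (ω : ℕ → ℝ → ℝ) (A : ℝ → ℝ)
    (hAcont : ContinuousOn A (Set.Ioc 0 1))
    (hA2π : ∀ τ ∈ Set.Ioc (0:ℝ) 1, A τ ≥ 2 * π)
    (hωcont : ∀ p, ContinuousOn (ω p) (Set.Ioc 0 1))
    (hmono : ∀ τ ∈ Set.Ioc (0:ℝ) 1, ∀ p q : ℕ, p ≤ q → ω p τ ≤ ω q τ)
    (hωub : ∀ p : ℕ, 1 ≤ p → ∀ τ ∈ Set.Ioc (0:ℝ) 1,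
      ω p τ ≤ 2 * π ^ 2 * τ * (Nat.sqrt p : ℝ))
    (hub : ∀ τ ∈ Set.Ioc (0:ℝ) 1, ¬ BddAbove (Set.range (fun p => ω p τ)))
    (hround : ω 1 1 = A 1) :
    ∃ τ ∈ Set.Ioo (0:ℝ) 1, ∃ p : ℕ, 1 < p ∧ A τ = ω p τ ∧ ω p τ > ω 1 τ := by
  -- τ₀ : a small time where ω 1 < A
  set τ₀ : ℝ := min (1 / (2 * π)) (1 / 2) with hτ₀def
  have hτ₀pos : 0 < τ₀ := lt_min (by positivity) (by norm_num)
  have hτ₀le : τ₀ ≤ 1 / 2 := min_le_right _ _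
  have hτ₀mem : τ₀ ∈ Set.Ioc (0:ℝ) 1 := ⟨hτ₀pos, by linarith⟩
  -- 2π²τ₀ ≤ π
  have hkey : ∀ τ ∈ Set.Ioc (0:ℝ) 1, τ ≤ τ₀ → 2 * π ^ 2 * τ * ((Nat.sqrt 1 : ℕ) : ℝ) ≤ π := by
    intro τ hτ hle
    have h1 : τ ≤ 1 / (2 * π) := le_trans hle (min_le_left _ _)
    have : (Nat.sqrt 1 : ℝ) = 1 := by norm_num [Nat.sqrt_one]
    rw [this, mul_one]
    have h2 : 2 * π * τ ≤ 1 := by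
      have := mul_le_mul_of_nonneg_left h1 (le_of_lt (by positivity : (0:ℝ) < 2 * π))
      rw [mul_one_div, div_self (by positivity : (2*π:ℝ) ≠ 0)] at this
      exact this
    nlinarith [hπ, hτ.1]
  -- choose p with ω p τ₀ > A τ₀
  obtain ⟨y, ⟨p0, hp0⟩, hy⟩ := (not_bddAbove_iff.mp (hub τ₀ hτ₀mem)) (A τ₀)
  set p : ℕ := max p0 2 with hpdef
  have hp2 : 2 ≤ p := le_max_right _ _
  have hωpτ₀ : A τ₀ < ω p τ₀ := by
    have := hmono τ₀ hτ₀mem p0 p (le_max_left _ _)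
    simp only at hp0
    linarith [hp0 ▸ hy]
  -- s = sqrt p ≥ 1
  have hspos : 0 < Nat.sqrt p := Nat.sqrt_pos.mpr (by omega)
  have hsR : (1:ℝ) ≤ (Nat.sqrt p : ℝ) := by exact_mod_cast hspos
  -- τ₁ small enough that ω p τ₁ < A τ₁
  set τ₁ : ℝ := min τ₀ (1 / (2 * π * (Nat.sqrt p : ℝ))) with hτ₁def
  have hτ₁pos : 0 < τ₁ := lt_min hτ₀pos (by positivity)
  have hτ₁le : τ₁ ≤ τ₀ := min_le_left _ _
  have hτ₁mem : τ₁ ∈ Set.Ioc (0:ℝ) 1 := ⟨hτ₁pos, le_trans hτ₁le hτ₀mem.2⟩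
  have hωpτ₁ : ω p τ₁ ≤ π := by
    have hub1 := hωub p (by omega) τ₁ hτ₁mem
    have h1 : τ₁ ≤ 1 / (2 * π * (Nat.sqrt p : ℝ)) := min_le_right _ _
    have hden : (0:ℝ) < 2 * π * (Nat.sqrt p : ℝ) := by positivity
    have h2 : 2 * π * (Nat.sqrt p : ℝ) * τ₁ ≤ 1 := by
      have := mul_le_mul_of_nonneg_left h1 hden.le
      rw [mul_one_div, div_self hden.ne'] at this
      exact this
    nlinarith [hπ, hτ₁pos]
  have hτ₁lt : ω p τ₁ < A τ₁ := lt_of_le_of_lt hωpτ₁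
    (by linarith [hA2π τ₁ hτ₁mem])
  -- IVT for g = ω p - A on [τ₁, τ₀]
  have hsub : Set.Icc τ₁ τ₀ ⊆ Set.Ioc (0:ℝ) 1 := fun x hx =>
    ⟨lt_of_lt_of_le hτ₁pos hx.1, le_trans hx.2 hτ₀mem.2⟩
  have hg : ContinuousOn (fun τ => ω p τ - A τ) (Set.Icc τ₁ τ₀) :=
    ((hωcont p).mono hsub).sub (hAcont.mono hsub)
  have hivt := intermediate_value_Icc hτ₁le hg
  have h0mem : (0:ℝ) ∈ Set.Icc (ω p τ₁ - A τ₁) (ω p τ₀ - A τ₀) :=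
    ⟨by linarith, by linarith⟩
  obtain ⟨τs, hτsmem, hτseq⟩ := hivt h0mem
  have hτsIoc : τs ∈ Set.Ioc (0:ℝ) 1 := hsub hτsmem
  have hAeq : A τs = ω p τs := by
    have : ω p τs - A τs = 0 := hτseq
    linarith
  have hω1 : ω 1 τs ≤ π := by
    have := hωub 1 le_rfl τs hτsIoc
    have := hkey τs hτsIoc (le_trans hτsmem.2 le_rfl)
    linarith
  have hgt : ω p τs > ω 1 τs := by
    have := hA2π τs hτsIoc
    linarith [hAeq ▸ this]
  exact ⟨τs, ⟨hτsIoc.1, lt_of_le_of_lt hτsmem.2 (by linarith)⟩, p, by omega, hAeq, hgt⟩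
end

section
/- Fix a real constant π > 0. Let ω : ℕ × (0,1] → ℝ and A : (0,1] → ℝ satisfy: (i) A is continuous and A(τ) ≥ 2π for all τ; (ii) each ω(p,·) is continuous on (0,1]; (iii) ω(p,τ) ≤ ω(q,τ) for p ≤ q; (iv) ω(p,τ) ≤ 2π²·τ·⌊√p⌋ for all p ≥ 1 and τ ∈ (0,1]; (v) for every τ ∈ (0,1] the sequence p ↦ ω(p,τ) is unbounded above; (vi) ω(1,1) = A(1). Then there exist a strictly increasing sequence of positive integers (q_i) and a strictly decreasing sequence (σ_i) in (0,1] such that for every i, A(σ_i) = ω(q_i, σ_i) > ω(q_i − 1, σ_i). -/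
set_option maxHeartbeats 1600000


theorem stmt_10 (π : ℝ) (hπ : 0 < π) (ω : ℕ → ℝ → ℝ) (A : ℝ → ℝ)
    (hAcont : ContinuousOn A (Set.Ioc 0 1))
    (hA2π : ∀ τ ∈ Set.Ioc (0:ℝ) 1, A τ ≥ 2 * π)
    (hωcont : ∀ p, ContinuousOn (ω p) (Set.Ioc 0 1))
    (hmono : ∀ τ ∈ Set.Ioc (0:ℝ) 1, ∀ p q : ℕ, p ≤ q → ω p τ ≤ ω q τ)
    (hωub : ∀ p : ℕ, 1 ≤ p → ∀ τ ∈ Set.Ioc (0:ℝ) 1,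
      ω p τ ≤ 2 * π ^ 2 * τ * (Nat.sqrt p : ℝ))
    (hub : ∀ τ ∈ Set.Ioc (0:ℝ) 1, ¬ BddAbove (Set.range (fun p => ω p τ)))
    (hround : ω 1 1 = A 1) :
    ∃ (q : ℕ → ℕ) (σ : ℕ → ℝ), StrictMono q ∧ (∀ i, 1 ≤ q i) ∧ StrictAnti σ ∧
      (∀ i, σ i ∈ Set.Ioc (0:ℝ) 1) ∧
      ∀ i, A (σ i) = ω (q i) (σ i) ∧ ω (q i) (σ i) > ω (q i - 1) (σ i) := by
  classical
  have step : ∀ (q : ℕ) (σ : ℝ), σ ∈ Set.Ioc (0:ℝ) 1 →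
      ∃ q' : ℕ, ∃ σ' : ℝ, q < q' ∧ 1 ≤ q' ∧ σ' < σ ∧ σ' ∈ Set.Ioc (0:ℝ) 1 ∧
        A σ' = ω q' σ' ∧ ω q' σ' > ω (q' - 1) σ' := by
    intro q σ hσ
    obtain ⟨hσ0, hσ1⟩ := hσ
    have hq2 : (0:ℝ) < π * ((q:ℝ) + 2) := by positivity
    set τ0 : ℝ := min (σ/2) (1/(π*((q:ℝ)+2))) with hτ0def
    have hτ0pos : 0 < τ0 := lt_min (by linarith) (by positivity)
    have hτ0ltσ : τ0 < σ := lt_of_le_of_lt (min_le_left _ _) (by linarith)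
    have hτ0le : τ0 ≤ 1/(π*((q:ℝ)+2)) := min_le_right _ _
    have hτ0mem : τ0 ∈ Set.Ioc (0:ℝ) 1 := ⟨hτ0pos, le_trans hτ0ltσ.le hσ1⟩
    -- get P with ω P τ0 > A τ0
    obtain ⟨y, hy, hylt⟩ : ∃ y ∈ Set.range (fun p => ω p τ0), A τ0 < y := by
      by_contra h
      push_neg at h
      exact hub τ0 hτ0mem ⟨A τ0, fun z hz => h z hz⟩
    obtain ⟨P0, rfl⟩ := hy
    set P := P0 + 1 with hPdef
    have hP1 : 1 ≤ P := Nat.le_add_left 1 P0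
    have hPτ0 : A τ0 < ω P τ0 :=
      lt_of_lt_of_le hylt (hmono τ0 hτ0mem P0 P (Nat.le_succ _))
    set sP : ℝ := (Nat.sqrt P : ℝ) with hsPdef
    have hsP0 : 0 ≤ sP := Nat.cast_nonneg _
    have hsP1 : (0:ℝ) < 2*π*(sP+1) := by positivity
    set τ1 : ℝ := min τ0 (1/(2*π*(sP+1))) with hτ1def
    have hτ1pos : 0 < τ1 := lt_min hτ0pos (by positivity)
    have hτ1le : τ1 ≤ τ0 := min_le_left _ _
    have hτ1mem : τ1 ∈ Set.Ioc (0:ℝ) 1 := ⟨hτ1pos, hτ1le.trans hτ0mem.2⟩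
    have hτ1small : τ1 * (2*π*(sP+1)) ≤ 1 := by
      have := min_le_right τ0 (1/(2*π*(sP+1)))
      calc τ1 * (2*π*(sP+1)) ≤ (1/(2*π*(sP+1))) * (2*π*(sP+1)) :=
            mul_le_mul_of_nonneg_right this hsP1.le
        _ = 1 := by field_simp
    have hτ1S : ω P τ1 < A τ1 := by
      have h1 : ω P τ1 ≤ 2 * π ^ 2 * τ1 * sP := hωub P hP1 τ1 hτ1mem
      have h2 : A τ1 ≥ 2 * π := hA2π τ1 hτ1mem
      nlinarith [mul_pos hπ hτ1pos, hτ1pos, hπ]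
    set S : Set ℝ := {τ : ℝ | τ ∈ Set.Ioc (0:ℝ) τ0 ∧ ω P τ < A τ} with hSdef
    have hτ1memS : τ1 ∈ S := ⟨⟨hτ1pos, hτ1le⟩, hτ1S⟩
    have hSne : S.Nonempty := ⟨τ1, hτ1memS⟩
    have hSbdd : BddAbove S := ⟨τ0, fun x hx => hx.1.2⟩
    set σ' : ℝ := sSup S with hσ'def
    have hσ'le : σ' ≤ τ0 := csSup_le hSne (fun x hx => hx.1.2)
    have hσ'pos : 0 < σ' := lt_of_lt_of_le hτ1pos (le_csSup hSbdd hτ1memS)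
    have hσ'mem : σ' ∈ Set.Ioc (0:ℝ) 1 := ⟨hσ'pos, hσ'le.trans hτ0mem.2⟩
    set g : ℝ → ℝ := fun τ => ω P τ - A τ with hgdef
    have hgcont : ContinuousOn g (Set.Ioc 0 1) := (hωcont P).sub hAcont
    -- g σ' = 0
    have hget : ∀ (c : ℝ), g σ' ∈ Set.Iio c ∨ g σ' ∈ Set.Ioi c →
        ∃ ε > (0:ℝ), ∀ x ∈ Set.Ioc (0:ℝ) 1, |x - σ'| < ε →
          (g σ' < c → g x < c) ∧ (c < g σ' → c < g x) := by
      intro c hc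
      have hcw : ContinuousWithinAt g (Set.Ioc 0 1) σ' := hgcont σ' hσ'mem
      have hev : ∀ᶠ x in nhdsWithin σ' (Set.Ioc 0 1),
          (g σ' < c → g x < c) ∧ (c < g σ' → c < g x) := by
        rcases hc with hc | hc
        · filter_upwards [hcw.eventually (eventually_lt_nhds hc)] with x hx
          exact ⟨fun _ => hx, fun h2 => absurd hc (not_lt.mpr h2.le)⟩
        · filter_upwards [hcw.eventually (eventually_gt_nhds hc)] with x hx
          exact ⟨fun h2 => absurd hc (not_lt.mpr h2.le), fun _ => hx⟩
      rw [eventually_nhdsWithin_iff] at hev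
      rcases Metric.eventually_nhds_iff.mp hev with ⟨ε, hε, hball⟩
      exact ⟨ε, hε, fun x hx hdist => hball (by simpa [Real.dist_eq] using hdist) hx⟩
    have hcross : ω P σ' = A σ' := by
      have h1 : ¬ g σ' < 0 := by
        intro h
        obtain ⟨ε, hε, hball⟩ := hget 0 (Or.inl h)
        have hσ'ltτ0 : σ' < τ0 := by
          rcases lt_or_eq_of_le hσ'le with h' | h'
          · exact h'
          · exfalso; rw [hσ'def] at h'  -- σ' = τ0
            have : g τ0 < 0 := h' ▸ h
            simp only [hgdef] at this
            linarith
        set x : ℝ := min (σ' + ε/2) ((σ' + τ0)/2) with hxdef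
        have hxgt : σ' < x := lt_min (by linarith) (by linarith)
        have hxle : x ≤ τ0 := le_trans (min_le_right _ _) (by linarith)
        have hxmem : x ∈ Set.Ioc (0:ℝ) 1 :=
          ⟨lt_trans hσ'pos hxgt, hxle.trans hτ0mem.2⟩
        have hdist : |x - σ'| < ε := by
          rw [abs_of_pos (by linarith)]
          have : x ≤ σ' + ε/2 := min_le_left _ _
          linarith
        have hgx : g x < 0 := (hball x hxmem hdist).1 h
        have hxS : x ∈ S := ⟨⟨lt_trans hσ'pos hxgt, hxle⟩, by simpa [hgdef, sub_neg] using hgx⟩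
        exact absurd (le_csSup hSbdd hxS) (not_le.mpr hxgt)
      have h2 : ¬ 0 < g σ' := by
        intro h
        obtain ⟨ε, hε, hball⟩ := hget 0 (Or.inr h)
        obtain ⟨x, hxS, hxgt⟩ := exists_lt_of_lt_csSup hSne (by linarith : σ' - ε < σ')
        have hxle : x ≤ σ' := le_csSup hSbdd hxS
        have hxmem : x ∈ Set.Ioc (0:ℝ) 1 := ⟨hxS.1.1, hxS.1.2.trans hτ0mem.2⟩
        have hdist : |x - σ'| < ε := by
          rw [abs_lt]; constructor <;> linarith
        have := (hball x hxmem hdist).2 h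
        have hgx : g x < 0 := by simpa [hgdef, sub_neg] using hxS.2
        linarith
      have : g σ' = 0 := le_antisymm (not_lt.mp h2) (not_lt.mp h1)
      simpa [hgdef, sub_eq_zero] using this
    -- least index attaining A σ'
    have hex : ∃ p : ℕ, A σ' ≤ ω p σ' := ⟨P, hcross.ge⟩
    set q' : ℕ := Nat.find hex with hq'def
    have hq'spec : A σ' ≤ ω q' σ' := Nat.find_spec hex
    have hq'leP : q' ≤ P := Nat.find_le hcross.ge
    have hq'eq : ω q' σ' = A σ' :=
      le_antisymm ((hmono σ' hσ'mem q' P hq'leP).trans hcross.le) hq'spec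
    have hσ'small : σ' * (π*((q:ℝ)+2)) ≤ 1 := by
      have h := hσ'le.trans hτ0le
      calc σ' * (π*((q:ℝ)+2)) ≤ (1/(π*((q:ℝ)+2))) * (π*((q:ℝ)+2)) :=
            mul_le_mul_of_nonneg_right h hq2.le
        _ = 1 := by field_simp
    have hA2 : A σ' ≥ 2 * π := hA2π σ' hσ'mem
    have hq'1 : 1 ≤ q' := by
      by_contra h
      push_neg at h
      interval_cases q'
      · have h1 : ω 0 σ' ≤ ω 1 σ' := hmono σ' hσ'mem 0 1 (by norm_num)
        have h2 : ω 1 σ' ≤ 2 * π ^ 2 * σ' * (Nat.sqrt 1 : ℝ) := hωub 1 le_rfl σ' hσ'mem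
        rw [Nat.sqrt_one] at h2
        push_cast at h2
        have hq0 : (0:ℝ) ≤ (q:ℝ) := Nat.cast_nonneg _
        have hA3 : 2*π ≤ 2*π^2*σ' := by linarith [hq'spec]
        have h4 : 1 ≤ π*σ' := by nlinarith [hπ]
        nlinarith [h4, hσ'small, hq0]
    have hq'gt : q < q' := by
      have h1 : ω q' σ' ≤ 2 * π ^ 2 * σ' * (Nat.sqrt q' : ℝ) := hωub q' hq'1 σ' hσ'mem
      have hs0 : (0:ℝ) ≤ (Nat.sqrt q' : ℝ) := Nat.cast_nonneg _
      have hkey : (q:ℝ) + 2 ≤ (Nat.sqrt q' : ℝ) := by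
        have hA3 : 2*π ≤ 2*π^2*σ'*(Nat.sqrt q' : ℝ) := by
          have := hq'eq ▸ h1
          linarith [hq'spec]
        have h6 : 1 ≤ π*σ'*(Nat.sqrt q' : ℝ) := by nlinarith [hπ]
        nlinarith [h6, hσ'small, mul_pos hπ hσ'pos]
      have hkey' : q + 2 ≤ Nat.sqrt q' := by exact_mod_cast hkey
      have := Nat.sqrt_le_self q'
      omega
    have hlt : ω (q' - 1) σ' < ω q' σ' := by
      have hp : q' - 1 < q' := Nat.sub_lt hq'1 one_pos
      have := Nat.find_min hex hp
      push_neg at this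
      exact lt_of_lt_of_le this hq'eq.ge
    exact ⟨q', σ', hq'gt, hq'1, lt_of_le_of_lt hσ'le hτ0ltσ, hσ'mem, hq'eq.symm, hlt⟩
  -- build the sequences by recursion
  let T := {x : ℕ × ℝ // 1 ≤ x.1 ∧ x.2 ∈ Set.Ioc (0:ℝ) 1 ∧ A x.2 = ω x.1 x.2 ∧
    ω x.1 x.2 > ω (x.1 - 1) x.2}
  have hnext : ∀ x : T, ∃ y : T, x.1.1 < y.1.1 ∧ y.1.2 < x.1.2 := by
    rintro ⟨⟨q0, σ0⟩, h1, h2, h3, h4⟩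
    obtain ⟨q', σ', hqq, hq1, hσσ, hmem, heq, hgt⟩ := step q0 σ0 h2
    exact ⟨⟨⟨q', σ'⟩, hq1, hmem, heq, hgt⟩, hqq, hσσ⟩
  obtain ⟨q0, σ0, _, hq1, _, hmem, heq, hgt⟩ :=
    step 0 1 ⟨one_pos, le_refl (1:ℝ)⟩
  choose F hF1 hF2 using hnext
  let x0 : T := ⟨⟨q0, σ0⟩, hq1, hmem, heq, hgt⟩
  let f : ℕ → T := fun n => F^[n] x0
  have hstep : ∀ n, f (n+1) = F (f n) := fun n => Function.iterate_succ_apply' F n x0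
  refine ⟨fun n => (f n).1.1, fun n => (f n).1.2, ?_, ?_, ?_, ?_, ?_⟩
  · apply strictMono_nat_of_lt_succ
    intro n
    rw [hstep n]
    exact hF1 (f n)
  · intro n; exact (f n).2.1
  · apply strictAnti_nat_of_succ_lt
    intro n
    rw [hstep n]
    exact hF2 (f n)
  · intro n; exact (f n).2.2.1
  · intro n; exact ⟨(f n).2.2.2.1, (f n).2.2.2.2⟩
end
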